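/- arXiv:2506.18741 — 2 statements merged into one kernel-verified Lean document; each statement's English description precedes it below -/
import Mathlib

section
/- Let G(x,t) = (2πt)^(-1/2) · exp(-x²/(2t)) denote the one-dimensional heat kernel. Then for all x, y > 0, the time integral of the difference of heat kernels satisfies ∫₀^∞ (G(x−y,t) − G(x+y,t)) dt = 2·min(x,y). -/
open MeasureTheory

/-- The one-dimensional heat kernel. -/
noncomputable def heatKernel (x t : ℝ) : ℝ :=
  (2 * Real.pi * t) ^ (-(1 : ℝ) / 2) * Real.exp (-x ^ 2 / (2 * t))

/-! For `a ≥ 0` the function `P_a(t) = √(2/π) (√t e^{-a²/2t} + a ∫₀^{a/√t} e^{-s²/2} ds)` is an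
antiderivative of `G(a, ·)` on `(0, ∞)` (after the substitution `s = √t` it is the antiderivative
`s e^{-a²/2s²} + a ∫₀^{a/s} e^{-u²/2} du` of `e^{-a²/2s²}`). It tends to `a` as `t → 0⁺` by the
Gaussian integral, and `P_a - P_b → 0` as `t → ∞`. Since `G(a,t) - G(b,t) ≥ 0` for `0 ≤ a ≤ b`,
the improper integral is `0 - (a - b) = b - a`; take `a = |x - y|`, `b = x + y`. -/

open Real Filter Set Topology

theorem integral_Ioi_of_hasDerivAt_of_nonneg_of_tendsto_nhdsGT {f f' : ℝ → ℝ} {a m l : ℝ}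
    (hderiv : ∀ x ∈ Ioi a, HasDerivAt f (f' x) x) (hf' : ∀ x ∈ Ioi a, 0 ≤ f' x)
    (hbot : Tendsto f (𝓝[>] a) (𝓝 m)) (htop : Tendsto f atTop (𝓝 l)) :
    ∫ x in Ioi a, f' x = l - m := by
  classical
  -- Redefine `f` at `a` so that it becomes continuous there.
  set g := Function.update f a m
  have hcont : ContinuousWithinAt g (Ici a) a := by
    rw [← Ici_sdiff_left] at hbot
    exact continuousWithinAt_update_same.mpr hbot
  have hderiv' : ∀ x ∈ Ioi a, HasDerivAt g (f' x) x := fun x hx =>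
    (hderiv x hx).congr_of_eventuallyEq <| by
      filter_upwards [eventually_ne_nhds (ne_of_gt hx)] with y hy using Function.update_of_ne hy m f
  have htop' : Tendsto g atTop (𝓝 l) := htop.congr' <| by
    filter_upwards [eventually_ne_atTop a] with x hx using (Function.update_of_ne hx m f).symm
  simpa [g] using integral_Ioi_of_hasDerivAt_of_nonneg hcont hderiv' hf' htop'

noncomputable def gaussianPrimitive (u : ℝ) : ℝ := ∫ s in (0 : ℝ)..u, exp (-s ^ 2 / 2)

theorem continuous_exp_neg_sq_div_two : Continuous fun s : ℝ => exp (-s ^ 2 / 2) := by fun_prop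

theorem hasDerivAt_gaussianPrimitive (u : ℝ) :
    HasDerivAt gaussianPrimitive (exp (-u ^ 2 / 2)) u :=
  intervalIntegral.integral_hasDerivAt_right
    (continuous_exp_neg_sq_div_two.intervalIntegrable _ _)
    continuous_exp_neg_sq_div_two.stronglyMeasurable.stronglyMeasurableAtFilter
    continuous_exp_neg_sq_div_two.continuousAt

theorem continuous_gaussianPrimitive : Continuous gaussianPrimitive :=
  continuous_iff_continuousAt.2 fun u => (hasDerivAt_gaussianPrimitive u).continuousAt

@[simp]
theorem gaussianPrimitive_zero : gaussianPrimitive 0 = 0 := intervalIntegral.integral_same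

theorem tendsto_gaussianPrimitive_atTop : Tendsto gaussianPrimitive atTop (𝓝 √(π / 2)) := by
  have hexp : (fun s : ℝ => exp (-s ^ 2 / 2)) = fun s => exp (-(1 / 2) * s ^ 2) := by
    funext s; ring_nf
  have hint : IntegrableOn (fun s : ℝ => exp (-s ^ 2 / 2)) (Ioi 0) := by
    rw [hexp]; exact (integrable_exp_neg_mul_sq (by norm_num)).integrableOn
  have hval : ∫ s in Ioi (0 : ℝ), exp (-s ^ 2 / 2) = √(π / 2) := by
    rw [hexp, integral_gaussian_Ioi, show π / (1 / 2) = 2 ^ 2 * (π / 2) by ring,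
      sqrt_mul (by positivity), sqrt_sq zero_le_two]
    ring
  have := intervalIntegral_tendsto_integral_Ioi 0 hint tendsto_id
  rwa [hval] at this

noncomputable def primitiveExpNegInvSq (a s : ℝ) : ℝ :=
  s * exp (-a ^ 2 / (2 * s ^ 2)) + a * gaussianPrimitive (a / s)

theorem hasDerivAt_primitiveExpNegInvSq (a : ℝ) {s : ℝ} (hs : s ≠ 0) :
    HasDerivAt (primitiveExpNegInvSq a) (exp (-a ^ 2 / (2 * s ^ 2))) s := by
  have hexponent : HasDerivAt (fun s : ℝ => -a ^ 2 / (2 * s ^ 2)) (a ^ 2 / s ^ 3) s := by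
    refine ((hasDerivAt_const s (-a ^ 2)).div ((hasDerivAt_pow 2 s).const_mul 2)
      (by positivity)).congr_deriv ?_
    field_simp
    ring
  have hquot : HasDerivAt (fun s : ℝ => a / s) (-a / s ^ 2) s :=
    ((hasDerivAt_const s a).div (hasDerivAt_id' s) hs).congr_deriv (by ring)
  have hgauss := (hasDerivAt_gaussianPrimitive (a / s)).comp s hquot
  refine (((hasDerivAt_id' s).mul hexponent.exp).add (hgauss.const_mul a)).congr_deriv ?_
  field_simp
  ring_nf

theorem tendsto_primitiveExpNegInvSq_nhdsGT_zero {a : ℝ} (ha : 0 ≤ a) :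
    Tendsto (primitiveExpNegInvSq a) (𝓝[>] 0) (𝓝 (a * √(π / 2))) := by
  have hexp : Tendsto (fun s : ℝ => s * exp (-a ^ 2 / (2 * s ^ 2))) (𝓝[>] 0) (𝓝 0) := by
    refine tendsto_of_tendsto_of_tendsto_of_le_of_le' tendsto_const_nhds
      (tendsto_nhdsWithin_of_tendsto_nhds (continuous_id.tendsto' 0 0 rfl)) ?_ ?_
    all_goals filter_upwards [self_mem_nhdsWithin] with s (hs : 0 < s)
    · positivity
    · refine mul_le_of_le_one_right hs.le (exp_le_one_iff.2 ?_)
      exact div_nonpos_of_nonpos_of_nonneg (neg_nonpos.2 (sq_nonneg a)) (by positivity)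
  have hgauss : Tendsto (fun s => a * gaussianPrimitive (a / s)) (𝓝[>] 0)
      (𝓝 (a * √(π / 2))) := by
    rcases ha.eq_or_lt with rfl | ha
    · simp
    · refine (tendsto_gaussianPrimitive_atTop.comp ?_).const_mul a
      simpa only [← div_eq_mul_inv] using tendsto_inv_nhdsGT_zero.const_mul_atTop ha
  rw [← zero_add (a * √(π / 2))]
  exact hexp.add hgauss

theorem tendsto_primitiveExpNegInvSq_sub_self_atTop (a : ℝ) :
    Tendsto (fun s => primitiveExpNegInvSq a s - s) atTop (𝓝 0) := by
  have hexp : Tendsto (fun s : ℝ => s * (1 - exp (-a ^ 2 / (2 * s ^ 2)))) atTop (𝓝 0) := by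
    have hbound := (tendsto_inv_atTop_zero (𝕜 := ℝ)).const_mul (a ^ 2 / 2)
    rw [mul_zero] at hbound
    refine tendsto_of_tendsto_of_tendsto_of_le_of_le' tendsto_const_nhds hbound ?_ ?_
    all_goals filter_upwards [eventually_gt_atTop 0] with s hs
    · refine mul_nonneg hs.le (sub_nonneg.2 (exp_le_one_iff.2 ?_))
      exact div_nonpos_of_nonpos_of_nonneg (neg_nonpos.2 (sq_nonneg a)) (by positivity)
    · have := add_one_le_exp (-a ^ 2 / (2 * s ^ 2))
      calc s * (1 - exp (-a ^ 2 / (2 * s ^ 2))) ≤ s * (a ^ 2 / (2 * s ^ 2)) := by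
            gcongr; linarith [neg_div (2 * s ^ 2) (a ^ 2)]
        _ = a ^ 2 / 2 * s⁻¹ := by field_simp
  have hgauss : Tendsto (fun s => a * gaussianPrimitive (a / s)) atTop (𝓝 0) := by
    have := (continuous_gaussianPrimitive.tendsto' 0 0 gaussianPrimitive_zero).comp
      (by simpa using (tendsto_inv_atTop_zero (𝕜 := ℝ)).const_mul a)
    simpa [div_eq_mul_inv] using this.const_mul a
  rw [← sub_zero 0]
  refine (hgauss.sub hexp).congr fun s => ?_
  simp only [primitiveExpNegInvSq]
  ring

noncomputable def heatPrimitive (a t : ℝ) : ℝ := √(2 / π) * primitiveExpNegInvSq a √t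

theorem hasDerivAt_heatPrimitive (a : ℝ) {t : ℝ} (ht : 0 < t) :
    HasDerivAt (heatPrimitive a) (heatKernel a t) t := by
  refine (((hasDerivAt_primitiveExpNegInvSq a (sqrt_ne_zero'.2 ht)).comp t
    (hasDerivAt_sqrt ht.ne')).const_mul √(2 / π)).congr_deriv ?_
  rw [heatKernel, sq_sqrt ht.le, show -(1 : ℝ) / 2 = -(1 / 2) by norm_num,
    rpow_neg (by positivity), ← sqrt_eq_rpow, sqrt_div' _ pi_pos.le, sqrt_mul (by positivity),
    sqrt_mul (by positivity)]
  field_simp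
  exact sq_sqrt zero_le_two

theorem tendsto_heatPrimitive_nhdsGT_zero {a : ℝ} (ha : 0 ≤ a) :
    Tendsto (heatPrimitive a) (𝓝[>] 0) (𝓝 a) := by
  have hsqrt : Tendsto (√·) (𝓝[>] (0 : ℝ)) (𝓝[>] 0) :=
    tendsto_nhdsWithin_iff.2 ⟨(continuous_sqrt.tendsto' 0 0 sqrt_zero).mono_left
      nhdsWithin_le_nhds, eventually_mem_nhdsWithin.mono fun _ => sqrt_pos.2⟩
  have h := ((tendsto_primitiveExpNegInvSq_nhdsGT_zero ha).comp hsqrt).const_mul √(2 / π)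
  rwa [mul_left_comm, ← sqrt_mul (by positivity), div_mul_div_comm, mul_comm 2 π,
    div_self (by positivity), sqrt_one, mul_one] at h

theorem tendsto_heatPrimitive_sub_atTop (a b : ℝ) :
    Tendsto (fun t => heatPrimitive a t - heatPrimitive b t) atTop (𝓝 0) := by
  have h := (((tendsto_primitiveExpNegInvSq_sub_self_atTop a).sub
    (tendsto_primitiveExpNegInvSq_sub_self_atTop b)).comp tendsto_sqrt_atTop).const_mul √(2 / π)
  rw [sub_zero, mul_zero] at h
  refine h.congr fun t => ?_
  simp only [heatPrimitive, Function.comp_apply]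
  ring

theorem heatKernel_le_heatKernel_of_sq_le {a b t : ℝ} (hab : a ^ 2 ≤ b ^ 2) (ht : 0 < t) :
    heatKernel b t ≤ heatKernel a t := by
  unfold heatKernel
  gcongr

theorem heatKernel_abs (x t : ℝ) : heatKernel |x| t = heatKernel x t := by
  simp only [heatKernel, sq_abs]

theorem integral_heatKernel_sub_heatKernel {a b : ℝ} (ha : 0 ≤ a) (hab : a ≤ b) :
    ∫ t in Ioi 0, (heatKernel a t - heatKernel b t) = b - a := by
  rw [integral_Ioi_of_hasDerivAt_of_nonneg_of_tendsto_nhdsGT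
    (f := fun t => heatPrimitive a t - heatPrimitive b t)
    (fun t ht => (hasDerivAt_heatPrimitive a ht).sub (hasDerivAt_heatPrimitive b ht))
    (fun t ht => sub_nonneg.2 (heatKernel_le_heatKernel_of_sq_le (pow_le_pow_left₀ ha hab 2) ht))
    ((tendsto_heatPrimitive_nhdsGT_zero ha).sub (tendsto_heatPrimitive_nhdsGT_zero (ha.trans hab)))
    (tendsto_heatPrimitive_sub_atTop a b)]
  ring

theorem stmt_0 (x y : ℝ) (hx : 0 < x) (hy : 0 < y) :
    ∫ t in Set.Ioi (0 : ℝ), (heatKernel (x - y) t - heatKernel (x + y) t) = 2 * min x y := by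
  simp only [← heatKernel_abs (x - y)]
  rw [integral_heatKernel_sub_heatKernel (abs_nonneg _)
    (abs_sub_le_iff.2 ⟨by linarith, by linarith⟩)]
  rcases le_total x y with h | h
  · rw [abs_of_nonpos (by linarith), min_eq_left h]; ring
  · rw [abs_of_nonneg (by linarith), min_eq_right h]; ring
end

section
/- Let Λ : [0,∞) → [0,α] be non-decreasing and right-continuous with Λ(t) → α as t → ∞, and let s(x) = inf{t : Λ(t) > x}. Write A = {t : Λ(t) = Λ(t⁻)} (continuity times). Then the Lebesgue–Stieltjes change of variables identity holds: ∫_{ {x : Λ(s(x)) = Λ(s(x)⁻)} } dx = ∫_{A} dΛ(t), i.e., the Lebesgue measure of the set of x covered at continuity times equals the dΛ-measure of the continuity times. -/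
/-!
Let `s` be the right-continuous generalized inverse of `Λ`. For `Λ 0 < x < α` one has
`leftLim Λ (s x) ≤ x ≤ Λ (s x)`, so `s x ≤ t` holds for `x < Λ t` and fails for `x > Λ t`.
Hence Lebesgue measure on `(Λ 0, α)` pushed forward by `s` gives `Λ t - Λ 0` to every `Iic t`,
i.e. it is the Stieltjes measure `dΛ`, which does not charge `(-∞, 0)` because `Λ` is constant
there. Evaluating both sides on the continuity set of `Λ`, which is measurable since its
complement is countable, gives the identity.
-/

open MeasureTheory Filter Set Topology

namespace StieltjesFunction

variable (f : StieltjesFunction ℝ) {a b : ℝ}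

noncomputable def generalizedInverse (x : ℝ) : ℝ := sInf {t | x < f t}

lemma bddBelow_setOf_lt (ha : Tendsto f atBot (𝓝 a)) {x : ℝ} (hx : a < x) :
    BddBelow {t | x < f t} := by
  obtain ⟨T, hT⟩ := eventually_atBot.1 (ha.eventually (eventually_lt_nhds hx))
  refine ⟨T, fun t ht => ?_⟩
  by_contra! htT
  exact lt_asymm ht (hT t htT.le)

lemma nonempty_setOf_lt (hb : Tendsto f atTop (𝓝 b)) {x : ℝ} (hx : x < b) :
    {t | x < f t}.Nonempty :=
  (hb.eventually (eventually_gt_nhds hx)).exists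

lemma generalizedInverse_le {x t : ℝ} (hbdd : BddBelow {t | x < f t}) (h : x < f t) :
    f.generalizedInverse x ≤ t :=
  csInf_le hbdd h

lemma le_apply_generalizedInverse {x : ℝ} (hne : {t | x < f t}.Nonempty) :
    x ≤ f (f.generalizedInverse x) := by
  refine ge_of_tendsto ((f.right_continuous _).mono Ioi_subset_Ici_self).tendsto ?_
  refine eventually_nhdsWithin_of_forall fun u hu => ?_
  obtain ⟨v, hv, hvu⟩ := exists_lt_of_csInf_lt hne hu
  exact hv.le.trans (f.mono hvu.le)

lemma monotoneOn_generalizedInverse (ha : Tendsto f atBot (𝓝 a)) (hb : Tendsto f atTop (𝓝 b)) :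
    MonotoneOn f.generalizedInverse (Ioo a b) := fun _ hx _ hy hxy =>
  csInf_le_csInf (f.bddBelow_setOf_lt ha hx.1) (f.nonempty_setOf_lt hb hy.2)
    fun _ ht => hxy.trans_lt ht

lemma aemeasurable_generalizedInverse (ha : Tendsto f atBot (𝓝 a))
    (hb : Tendsto f atTop (𝓝 b)) :
    AEMeasurable f.generalizedInverse (volume.restrict (Ioo a b)) :=
  aemeasurable_restrict_of_monotoneOn measurableSet_Ioo (f.monotoneOn_generalizedInverse ha hb)

lemma volume_preimage_generalizedInverse_Iic_inter_Ioo (ha : Tendsto f atBot (𝓝 a))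
    (hb : Tendsto f atTop (𝓝 b)) (t : ℝ) :
    volume (f.generalizedInverse ⁻¹' Iic t ∩ Ioo a b) = ENNReal.ofReal (f t - a) := by
  have hsub_lt : Ioo a (f t) ⊆ f.generalizedInverse ⁻¹' Iic t ∩ Ioo a b := fun x hx =>
    ⟨f.generalizedInverse_le (f.bddBelow_setOf_lt ha hx.1) hx.2,
      hx.1, hx.2.trans_le (f.mono.ge_of_tendsto hb t)⟩
  have hsub_le : f.generalizedInverse ⁻¹' Iic t ∩ Ioo a b ⊆ Ioc a (f t) := fun x hx =>
    ⟨hx.2.1, (f.le_apply_generalizedInverse (f.nonempty_setOf_lt hb hx.2.2)).trans (f.mono hx.1)⟩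
  apply le_antisymm
  · calc _ ≤ volume (Ioc a (f t)) := measure_mono hsub_le
      _ = _ := Real.volume_Ioc
  · calc ENNReal.ofReal (f t - a) = volume (Ioo a (f t)) := Real.volume_Ioo.symm
      _ ≤ _ := measure_mono hsub_lt

theorem map_generalizedInverse_volume_restrict_Ioo (ha : Tendsto f atBot (𝓝 a))
    (hb : Tendsto f atTop (𝓝 b)) :
    (volume.restrict (Ioo a b)).map f.generalizedInverse = f.measure := by
  refine Measure.ext_of_Iic _ _ fun t => ?_
  rw [Measure.map_apply_of_aemeasurable (f.aemeasurable_generalizedInverse ha hb) measurableSet_Iic,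
    Measure.restrict_apply' measurableSet_Ioo, f.measure_Iic ha,
    f.volume_preimage_generalizedInverse_Iic_inter_Ioo ha hb]

theorem volume_Ico_inter_preimage_generalizedInverse (ha : Tendsto f atBot (𝓝 a))
    (hb : Tendsto f atTop (𝓝 b)) {C : Set ℝ} (hC : MeasurableSet C) :
    volume (Ico a b ∩ f.generalizedInverse ⁻¹' C) = f.measure C := by
  rw [← f.map_generalizedInverse_volume_restrict_Ioo ha hb,
    Measure.map_apply_of_aemeasurable (f.aemeasurable_generalizedInverse ha hb) hC,
    Measure.restrict_congr_set Ioo_ae_eq_Ico, Measure.restrict_apply' measurableSet_Ico, inter_comm]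

lemma measurableSet_setOf_leftLim_eq : MeasurableSet {t | Function.leftLim f t = f t} := by
  simpa only [compl_ofPred, not_not] using f.countable_leftLim_ne.measurableSet.compl

end StieltjesFunction

theorem stmt_17_general (α : ℝ) (Λ : StieltjesFunction ℝ)
    (hneg : ∀ t < (0 : ℝ), Λ t = Λ 0)
    (hsup : Filter.Tendsto Λ Filter.atTop (nhds α))
    (s : ℝ → ℝ) (hs : ∀ x, s x = sInf {t : ℝ | x < Λ t}) :
    volume {x : ℝ | x ∈ Set.Ico (Λ 0) α ∧ Function.leftLim Λ (s x) = Λ (s x)} =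
      Λ.measure {t : ℝ | 0 ≤ t ∧ Function.leftLim Λ t = Λ t} := by
  obtain rfl : s = Λ.generalizedInverse := funext hs
  have hbot : Tendsto Λ atBot (𝓝 (Λ 0)) :=
    tendsto_const_nhds.congr' (eventually_atBot.2 ⟨-1, fun t ht => (hneg t (by linarith)).symm⟩)
  have hIio : Λ.measure (Iio 0) = 0 := by
    rw [Λ.measure_Iio hbot, ENNReal.ofReal_eq_zero, sub_nonpos]
    exact Λ.mono.leftLim_le le_rfl
  calc _ = volume (Ico (Λ 0) α ∩ Λ.generalizedInverse ⁻¹' {t | Function.leftLim Λ t = Λ t}) := rfl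
    _ = Λ.measure {t | Function.leftLim Λ t = Λ t} :=
      Λ.volume_Ico_inter_preimage_generalizedInverse hbot hsup Λ.measurableSet_setOf_leftLim_eq
    _ = Λ.measure (Ici 0 ∩ {t | Function.leftLim Λ t = Λ t}) := by
      rw [inter_comm, measure_inter_conull (by rwa [compl_Ici])]

theorem stmt_17 (α : ℝ) (hα : 0 < α) (Λ : StieltjesFunction ℝ)
    (hneg : ∀ t < (0 : ℝ), Λ t = Λ 0)
    (hnn : ∀ t, 0 ≤ Λ t) (hle : ∀ t, Λ t ≤ α)
    (hsup : Filter.Tendsto Λ Filter.atTop (nhds α))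
    (s : ℝ → ℝ) (hs : ∀ x, s x = sInf {t : ℝ | x < Λ t}) :
    volume {x : ℝ | x ∈ Set.Ico (Λ 0) α ∧ Function.leftLim Λ (s x) = Λ (s x)} =
      Λ.measure {t : ℝ | 0 ≤ t ∧ Function.leftLim Λ t = Λ t} :=
  stmt_17_general α Λ hneg hsup s hs
end
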